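/- The class of rooted CQs is not rewritable to max unions of CQs for DL-Lite_core^bag: there exist a rooted CQ q(x) and a DL-Lite_core TBox T such that for every max union of CQs q'(x) = q₁(x) ∨ … ∨ q_n(x) there is a bag ABox A with ⟨T,A⟩ satisfiable and q^{⟨T,A⟩} ≠ q'^{C(⟨∅,A⟩)}. In particular, this is witnessed by T = {A ⊑ ∃R, ∃R⁻ ⊑ B} and q(x) = ∃y. R(x,y) ∧ B(y), with counterexample ABox A containing A(a) with multiplicity 3, R(a,b) with multiplicity 2, and B(b) with multiplicity 3. -/

import Mathlib

/-!
Common formalization of the bag semantics of DL-Lite ontologies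
(Nikolaou et al., "The Bag Semantics of Ontology-Based Data Access").
-/

open scoped Classical

noncomputable section

/-- Individuals (constants). -/
abbrev Ind : Type := ℕ
/-- Variables. -/
abbrev Var : Type := ℕ
/-- Atomic concepts (unary predicates). -/
abbrev AtomicConcept : Type := ℕ
/-- Atomic roles (binary predicates). -/
abbrev AtomicRole : Type := ℕ

/-- A role is an atomic role or its inverse. -/
inductive Role where
  | atomic : AtomicRole → Role
  | inv : AtomicRole → Role
  deriving DecidableEq

/-- A concept is an atomic concept or `∃R` for a role `R`. -/
inductive DLConcept where
  | atomic : AtomicConcept → DLConcept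
  | ex : Role → DLConcept
  deriving DecidableEq

/-- TBox axioms: inclusions and disjointness axioms between concepts or roles. -/
inductive TBoxAxiom where
  | cIncl : DLConcept → DLConcept → TBoxAxiom
  | rIncl : Role → Role → TBoxAxiom
  | cDisj : DLConcept → DLConcept → TBoxAxiom
  | rDisj : Role → Role → TBoxAxiom
  deriving DecidableEq

/-- A DL-Lite_R TBox: a finite set of TBox axioms. -/
abbrev TBox : Type := Finset TBoxAxiom

/-- A DL-Lite_core TBox: only concept inclusions and concept disjointness axioms. -/
def TBox.IsCore (T : TBox) : Prop :=
  ∀ ax ∈ T, (∃ C D, ax = TBoxAxiom.cIncl C D) ∨ (∃ C D, ax = TBoxAxiom.cDisj C D)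

/-- ABox assertions. -/
inductive Assertion where
  | conceptA : AtomicConcept → Ind → Assertion
  | roleA : AtomicRole → Ind → Ind → Assertion
  deriving DecidableEq

/-- A bag ABox: a finite bag of assertions (represented as a multiset). -/
abbrev BagABox : Type := Multiset Assertion

/-- Multiplicity of an assertion in a bag ABox, as an extended natural. -/
def BagABox.mult (A : BagABox) (s : Assertion) : ℕ∞ := (A.count s : ℕ∞)

/-- Sum of an arbitrary family of extended naturals. -/
def bagSum {α : Type*} (f : α → ℕ∞) : ℕ∞ := ⨆ s : Finset α, ∑ x ∈ s, f x

/-- A bag interpretation. -/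
structure BagInterp : Type 1 where
  Δ : Type
  dne : Nonempty Δ
  indMap : Ind → Δ
  indInj : Function.Injective indMap
  cI : AtomicConcept → Δ → ℕ∞
  rI : AtomicRole → Δ → Δ → ℕ∞

/-- Extension of the interpretation function to roles. -/
def BagInterp.roleMult (I : BagInterp) : Role → I.Δ → I.Δ → ℕ∞
  | Role.atomic P => fun u v => I.rI P u v
  | Role.inv P => fun u v => I.rI P v u

/-- Extension of the interpretation function to concepts. -/
def BagInterp.conceptMult (I : BagInterp) : DLConcept → I.Δ → ℕ∞
  | DLConcept.atomic A => fun u => I.cI A u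
  | DLConcept.ex R => fun u => bagSum (fun v => I.roleMult R u v)

/-- Multiplicity of an assertion in a bag interpretation. -/
def BagInterp.assertMult (I : BagInterp) : Assertion → ℕ∞
  | Assertion.conceptA A a => I.cI A (I.indMap a)
  | Assertion.roleA P a b => I.rI P (I.indMap a) (I.indMap b)

/-- Satisfaction of a TBox axiom by a bag interpretation. -/
def BagInterp.SatisfiesAx (I : BagInterp) : TBoxAxiom → Prop
  | TBoxAxiom.cIncl C D => ∀ u, I.conceptMult C u ≤ I.conceptMult D u
  | TBoxAxiom.rIncl R S => ∀ u v, I.roleMult R u v ≤ I.roleMult S u v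
  | TBoxAxiom.cDisj C D => ∀ u, min (I.conceptMult C u) (I.conceptMult D u) = 0
  | TBoxAxiom.rDisj R S => ∀ u v, min (I.roleMult R u v) (I.roleMult S u v) = 0

/-- A DL-Lite^bag ontology. -/
structure Ontology : Type where
  tbox : TBox
  abox : BagABox

/-- `I` is a bag model of the ontology `K`. -/
def BagInterp.IsModel (I : BagInterp) (K : Ontology) : Prop :=
  (∀ ax ∈ K.tbox, I.SatisfiesAx ax) ∧
  ∀ s : Assertion, BagABox.mult K.abox s ≤ I.assertMult s

/-- Satisfiability of an ontology under bag semantics. -/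
def Ontology.Satisfiable (K : Ontology) : Prop := ∃ I : BagInterp, I.IsModel K

/- ## Conjunctive queries -/

/-- Terms: variables or individuals. -/
inductive Term where
  | var : Var → Term
  | ind : Ind → Term
  deriving DecidableEq

def Term.varsOf : Term → List Var
  | Term.var v => [v]
  | Term.ind _ => []

def Term.indsOf : Term → List Ind
  | Term.var _ => []
  | Term.ind a => [a]

/-- Query atoms: concept atoms, role atoms, and equalities. -/
inductive QAtom where
  | conceptAt : AtomicConcept → Term → QAtom
  | roleAt : AtomicRole → Term → Term → QAtom
  | eqAt : Var → Term → QAtom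
  deriving DecidableEq

def QAtom.terms : QAtom → List Term
  | QAtom.conceptAt _ t => [t]
  | QAtom.roleAt _ t₁ t₂ => [t₁, t₂]
  | QAtom.eqAt z t => [Term.var z, t]

def QAtom.vars : QAtom → List Var
  | QAtom.conceptAt _ t => t.varsOf
  | QAtom.roleAt _ t₁ t₂ => t₁.varsOf ++ t₂.varsOf
  | QAtom.eqAt z t => z :: t.varsOf

/-- A conjunctive query `q(x) = ∃y. φ(x,y)`: a tuple of answer variables,
a tuple of existential variables, and a conjunction (list, i.e. allowing
repetitions) of atoms. -/
structure CQ : Type where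
  answerVars : List Var
  existVars : List Var
  atoms : List QAtom

def CQ.vars (q : CQ) : List Var := q.answerVars ++ q.existVars

/-- Value of a term under a valuation of the variables. -/
def termVal (I : BagInterp) (f : Var → I.Δ) : Term → I.Δ
  | Term.var v => f v
  | Term.ind a => I.indMap a

/-- Multiplicity contributed by an atom under a valuation: for predicate atoms the
multiplicity of the image tuple, for equalities the indicator of satisfaction. -/
def QAtom.mult (I : BagInterp) (f : Var → I.Δ) : QAtom → ℕ∞
  | QAtom.conceptAt A t => I.cI A (termVal I f t)
  | QAtom.roleAt P t₁ t₂ => I.rI P (termVal I f t₁) (termVal I f t₂)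
  | QAtom.eqAt z t => if f z = termVal I f t then 1 else 0

/-- The bag answers `q^I(ā)`: the sum, over all valuations of the variables of `q`
mapping the answer variables to `ā` (valuations are normalized to a fixed junk
value outside the variables of `q`), of the product of the multiplicities of the
atom occurrences of `q`. -/
def CQ.bagAnswer (q : CQ) (I : BagInterp) (a : List Ind) : ℕ∞ :=
  bagSum (fun f : {f : Var → I.Δ //
      (∀ v, v ∉ q.vars → f v = I.indMap 0) ∧
      q.answerVars.map f = a.map I.indMap} =>
    (q.atoms.map (QAtom.mult I f.1)).prod)

/-- Bag certain answers: pointwise minimum over all bag models. -/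
def bagCertain (K : Ontology) (q : CQ) (a : List Ind) : ℕ∞ :=
  ⨅ (I : BagInterp) (_ : I.IsModel K), q.bagAnswer I a

/-- Base relation of the equivalence relation generated by the equality atoms. -/
def CQ.eqBase (q : CQ) : Term → Term → Prop := fun t₁ t₂ =>
  ∃ z t, QAtom.eqAt z t ∈ q.atoms ∧ t₁ = Term.var z ∧ t₂ = t

/-- Equivalence of terms generated by the equality atoms of `q`. -/
def CQ.eqRel (q : CQ) : Term → Term → Prop := Relation.EqvGen q.eqBase

/-- Safety: the class of every variable contains a term occurring in a
non-equality atom. -/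
def CQ.Safe (q : CQ) : Prop :=
  ∀ v ∈ q.vars, ∃ t : Term, ∃ atm ∈ q.atoms,
    (∀ z s, atm ≠ QAtom.eqAt z s) ∧ t ∈ QAtom.terms atm ∧ q.eqRel (Term.var v) t

/-- Well-formedness of CQs: repetition-free disjoint tuples of variables, all
variables of the atoms among the declared variables, and safety. -/
def CQ.WellFormed (q : CQ) : Prop :=
  q.answerVars.Nodup ∧ q.existVars.Nodup ∧
  (∀ v ∈ q.answerVars, v ∉ q.existVars) ∧
  (∀ atm ∈ q.atoms, ∀ v ∈ QAtom.vars atm, v ∈ q.vars) ∧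
  q.Safe

def CQ.mentionsTerm (q : CQ) (t : Term) : Prop := ∃ atm ∈ q.atoms, t ∈ QAtom.terms atm

/-- Adjacency in the Gaifman graph of `q` (on terms; equality atoms merge the
classes of their two terms, which for connectivity purposes is the same as
making them adjacent). -/
def CQ.gaifmanAdj (q : CQ) : Term → Term → Prop := fun t₁ t₂ =>
  ∃ atm ∈ q.atoms, t₁ ∈ QAtom.terms atm ∧ t₂ ∈ QAtom.terms atm

/-- A CQ is rooted if every connected component of its Gaifman graph contains
an answer variable or an individual. -/
def CQ.Rooted (q : CQ) : Prop :=
  ∀ t : Term, q.mentionsTerm t →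
    ∃ t' : Term, Relation.ReflTransGen q.gaifmanAdj t t' ∧
      ((∃ v ∈ q.answerVars, t' = Term.var v) ∨ ∃ a : Ind, t' = Term.ind a)

/- ## Set semantics -/

/-- A classical (set) interpretation. -/
structure SetInterp : Type 1 where
  Δ : Type
  dne : Nonempty Δ
  indMap : Ind → Δ
  indInj : Function.Injective indMap
  cI : AtomicConcept → Set Δ
  rI : AtomicRole → Set (Δ × Δ)

def SetInterp.roleSet (I : SetInterp) : Role → Set (I.Δ × I.Δ)
  | Role.atomic P => I.rI P
  | Role.inv P => {p | (p.2, p.1) ∈ I.rI P}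

def SetInterp.conceptSet (I : SetInterp) : DLConcept → Set I.Δ
  | DLConcept.atomic A => I.cI A
  | DLConcept.ex R => {u | ∃ v, (u, v) ∈ I.roleSet R}

def SetInterp.SatisfiesAx (I : SetInterp) : TBoxAxiom → Prop
  | TBoxAxiom.cIncl C D => I.conceptSet C ⊆ I.conceptSet D
  | TBoxAxiom.rIncl R S => I.roleSet R ⊆ I.roleSet S
  | TBoxAxiom.cDisj C D => I.conceptSet C ∩ I.conceptSet D = ∅
  | TBoxAxiom.rDisj R S => I.roleSet R ∩ I.roleSet S = ∅

def SetInterp.SatisfiesAssertion (I : SetInterp) : Assertion → Prop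
  | Assertion.conceptA A a => I.indMap a ∈ I.cI A
  | Assertion.roleA P a b => (I.indMap a, I.indMap b) ∈ I.rI P

/-- `I` is a (set) model of the TBox `T` and the set ABox `A`. -/
def SetInterp.IsModelOf (I : SetInterp) (T : TBox) (A : Finset Assertion) : Prop :=
  (∀ ax ∈ T, I.SatisfiesAx ax) ∧ ∀ s ∈ A, I.SatisfiesAssertion s

def setTermVal (I : SetInterp) (f : Var → I.Δ) : Term → I.Δ
  | Term.var v => f v
  | Term.ind a => I.indMap a

def SetInterp.SatAtom (I : SetInterp) (f : Var → I.Δ) : QAtom → Prop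
  | QAtom.conceptAt A t => setTermVal I f t ∈ I.cI A
  | QAtom.roleAt P t₁ t₂ => (setTermVal I f t₁, setTermVal I f t₂) ∈ I.rI P
  | QAtom.eqAt z t => f z = setTermVal I f t

/-- `q(ā)` holds in the set interpretation `I`. -/
def SetInterp.SatCQ (I : SetInterp) (q : CQ) (a : List Ind) : Prop :=
  ∃ f : Var → I.Δ, q.answerVars.map f = a.map I.indMap ∧ ∀ atm ∈ q.atoms, I.SatAtom f atm

/-- Entailment of a concept inclusion from a TBox (standard set semantics). -/
def TBox.EntailsCI (T : TBox) (C D : DLConcept) : Prop :=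
  ∀ I : SetInterp, (∀ ax ∈ T, I.SatisfiesAx ax) → I.conceptSet C ⊆ I.conceptSet D

/- ## The canonical bag model -/

/-- Domain elements of the canonical model: individuals and anonymous elements
`w^j_{u,R}`. -/
inductive CanElem where
  | ind : Ind → CanElem
  | anon : CanElem → Role → ℕ → CanElem
  deriving DecidableEq

def CanElem.isAnon : CanElem → Prop
  | CanElem.ind _ => False
  | CanElem.anon _ _ _ => True

/-- A stage of the canonical-model construction: a set of active elements and
bag interpretations of the predicates. -/
structure PreInterp : Type where
  active : Set CanElem
  c : AtomicConcept → CanElem → ℕ∞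
  r : AtomicRole → CanElem → CanElem → ℕ∞

def PreInterp.toInterp (P : PreInterp) : BagInterp where
  Δ := CanElem
  dne := ⟨CanElem.ind 0⟩
  indMap := CanElem.ind
  indInj := fun a b h => by cases h; rfl
  cI := P.c
  rI := P.r

/-- Concept closure: `ccl(u,I,T)(C)` is the supremum of `C₀^I(u)` over all
concepts `C₀` with `T ⊨ C₀ ⊑ C`. -/
def cclI (T : TBox) (I : BagInterp) (C : DLConcept) (u : I.Δ) : ℕ∞ :=
  ⨆ C₀ : {C₀ : DLConcept // TBox.EntailsCI T C₀ C}, I.conceptMult C₀.1 u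

def PreInterp.ccl (P : PreInterp) (T : TBox) (u : CanElem) (C : DLConcept) : ℕ∞ :=
  cclI T P.toInterp C u

/-- `δ = ccl(u,C_{i-1},T)(∃R) − (∃R)^{C_{i-1}}(u)` (truncated subtraction). -/
def PreInterp.delta (P : PreInterp) (T : TBox) (u : CanElem) (R : Role) : ℕ∞ :=
  P.ccl T u (DLConcept.ex R) - P.toInterp.conceptMult (DLConcept.ex R) u

/-- The anonymous elements freshly added when stepping from `P`. -/
def PreInterp.NewAnon (P : PreInterp) (T : TBox) (w : CanElem) : Prop :=
  ∃ u R j, w = CanElem.anon u R j ∧ u ∈ P.active ∧ (j : ℕ∞) < P.delta T u R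

/-- One step of the canonical-model construction. -/
def PreInterp.step (P : PreInterp) (T : TBox) : PreInterp where
  active := P.active ∪ {w | P.NewAnon T w}
  c := fun A u => if u ∈ P.active then P.ccl T u (DLConcept.atomic A) else 0
  r := fun P₀ u v =>
    if u ∈ P.active ∧ v ∈ P.active then P.r P₀ u v
    else if ∃ j, v = CanElem.anon u (Role.atomic P₀) j ∧ P.NewAnon T v then 1
    else if ∃ j, u = CanElem.anon v (Role.inv P₀) j ∧ P.NewAnon T u then 1
    else 0

/-- The stages `C_i(K)` of the canonical bag model. -/
def canStage (K : Ontology) : ℕ → PreInterp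
  | 0 =>
    { active := Set.range CanElem.ind
      c := fun A u =>
        match u with
        | CanElem.ind a => BagABox.mult K.abox (Assertion.conceptA A a)
        | _ => 0
      r := fun P u v =>
        match u, v with
        | CanElem.ind a, CanElem.ind b => BagABox.mult K.abox (Assertion.roleA P a b)
        | _, _ => 0 }
  | (i + 1) => (canStage K i).step K.tbox

/-- The canonical bag model `C(K) = ⋃_{i ≥ 0} C_i(K)` (pointwise maximum). -/
def canInterp (K : Ontology) : BagInterp where
  Δ := CanElem
  dne := ⟨CanElem.ind 0⟩
  indMap := CanElem.ind
  indInj := fun a b h => by cases h; rfl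
  cI := fun A u => ⨆ i, (canStage K i).c A u
  rI := fun P u v => ⨆ i, (canStage K i).r P u v

/-- The canonical bag model `C(⟨∅,A⟩)` of the ontology with empty TBox:
individuals as domain, every predicate interpreted by its ABox bag. -/
def emptyCanInterp (A : BagABox) : BagInterp where
  Δ := Ind
  dne := ⟨0⟩
  indMap := id
  indInj := fun _ _ h => h
  cI := fun C a => BagABox.mult A (Assertion.conceptA C a)
  rI := fun P a b => BagABox.mult A (Assertion.roleA P a b)

/-- `[q,z]^{C(K)}`: bag answers over the canonical model computed only over
valuations sending the variables of `z` to anonymous elements and the remaining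
existential variables to individuals. -/
def CQ.restrictedAnswer (q : CQ) (K : Ontology) (z : Finset Var) (a : List Ind) : ℕ∞ :=
  bagSum (fun f : {f : Var → CanElem //
      (∀ v, v ∉ q.vars → f v = CanElem.ind 0) ∧
      q.answerVars.map f = a.map CanElem.ind ∧
      ∀ v ∈ q.existVars, (v ∈ z → CanElem.isAnon (f v)) ∧ (v ∉ z → ∃ b : Ind, f v = CanElem.ind b)} =>
    (q.atoms.map (QAtom.mult (canInterp K) f.1)).prod)

/- ## Ma-connected subsets, realisability, and the per-`z` rewritten query -/

/-- `t` is a variable belonging to `z`. -/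
def Term.IsZVar (t : Term) (z : Finset Var) : Prop := ∃ v ∈ z, t = Term.var v

/-- Adjacency in the Gaifman graph restricted to nodes that are variables of `z`. -/
def CQ.zAdj (q : CQ) (z : Finset Var) : Term → Term → Prop := fun t₁ t₂ =>
  q.gaifmanAdj t₁ t₂ ∧ t₁.IsZVar z ∧ t₂.IsZVar z

/-- `z'` is maximally connected in the anonymous part (ma-connected) within `z`. -/
def CQ.MAConnected (q : CQ) (z z' : Finset Var) : Prop :=
  z' ⊆ z ∧
  (∀ v ∈ z', ∀ w ∈ z, Relation.ReflTransGen (q.zAdj z) (Term.var v) (Term.var w) → w ∈ z') ∧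
  (∀ v ∈ z', ∀ w ∈ z', Relation.ReflTransGen (q.zAdj z) (Term.var v) (Term.var w))

/-- `φ_{z'}`: the subconjunction of all atoms of `q` mentioning a variable of `z'`. -/
def CQ.subAtoms (q : CQ) (z' : Finset Var) : List QAtom :=
  q.atoms.filter (fun atm => decide (∃ v ∈ z', v ∈ QAtom.vars atm))

def termsOfList (l : List QAtom) : List Term :=
  l.foldr (fun atm acc => QAtom.terms atm ++ acc) []

/-- `t_{z'}`: all terms occurring in `φ_{z'}` that are not variables of `z`. -/
def CQ.tTerms (q : CQ) (z z' : Finset Var) : List Term :=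
  (termsOfList (q.subAtoms z')).filter (fun t => decide (¬ t.IsZVar z))

/-- `atm` is a legitimate choice of `α_{z'}`: an atom of `φ_{z'}` of the form
`P(t,z)` or `P(z,t)` with `z ∈ z'` and the term `t` not a variable of `z`. -/
def IsAlphaFor (q : CQ) (z z' : Finset Var) (atm : QAtom) : Prop :=
  atm ∈ q.subAtoms z' ∧
  ((∃ P t v, v ∈ z' ∧ ¬ Term.IsZVar t z ∧ atm = QAtom.roleAt P t (Term.var v)) ∨
   (∃ P t v, v ∈ z' ∧ ¬ Term.IsZVar t z ∧ atm = QAtom.roleAt P (Term.var v) t))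

def CQ.inds (q : CQ) : List Ind :=
  (termsOfList q.atoms).foldr (fun t acc => t.indsOf ++ acc) []

def CQ.maxInd (q : CQ) : Ind := q.inds.foldr max 0

/-- The individual `a` of `q^a_{z'}`: the individual among `t_{z'}` if one
exists, and a fresh individual otherwise. -/
def freshA (q : CQ) (z z' : Finset Var) : Ind :=
  if h : ∃ c : Ind, Term.ind c ∈ q.tTerms z z' then h.choose else q.maxInd + 1

/-- A fresh individual `b` (distinct from `freshA`). -/
def freshB (q : CQ) : Ind := q.maxInd + 2

/-- The one-assertion bag ABox `A'` used to test realisability: `{P(a,b)}` if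
`α_{z'} = P(t,z)` and `{P(b,a)}` if `α_{z'} = P(z,t)`. -/
def alphaABox (z' : Finset Var) (atm : QAtom) (a b : Ind) : BagABox :=
  match atm with
  | QAtom.roleAt P _ t₂ =>
      if Term.IsZVar t₂ z' then {Assertion.roleA P a b} else {Assertion.roleA P b a}
  | _ => 0

def subVars (q : CQ) (z' : Finset Var) : List Var :=
  (q.subAtoms z').foldr (fun atm acc => QAtom.vars atm ++ acc) []

/-- The bag answer `(q^a_{z'})^{C(⟨T,A'⟩)}(⟨⟩)` of the Boolean query
`q^a_{z'}() = ∃x'.∃z'. φ_{z'} ∧ ⋀_{t ∈ t_{z'}}(t = a) ∧ ⋀_{z ∈ z'}(z ≠ a)`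
over the canonical model of `⟨T,A'⟩`. -/
def realQAnswer (T : TBox) (q : CQ) (z z' : Finset Var) (atm : QAtom) : ℕ∞ :=
  bagSum (fun f : {f : Var → CanElem //
      (∀ v, v ∉ subVars q z' → f v = CanElem.ind 0) ∧
      (∀ t ∈ q.tTerms z z',
        termVal (canInterp ⟨T, alphaABox z' atm (freshA q z z') (freshB q)⟩) f t
          = CanElem.ind (freshA q z z')) ∧
      ∀ v ∈ z', f v ≠ CanElem.ind (freshA q z z')} =>
    ((q.subAtoms z').map
      (QAtom.mult (canInterp ⟨T, alphaABox z' atm (freshA q z z') (freshB q)⟩) f.1)).prod)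

/-- Equality-consistency of `z`: no equality atom `z = t` with `z ∈ z` and `t ∉ z`. -/
def EqConsistent (q : CQ) (z : Finset Var) : Prop :=
  ∀ v t, QAtom.eqAt v t ∈ q.atoms → v ∈ z → Term.IsZVar t z

/-- The ma-connected subset `z'` is realisable by `T` (w.r.t. the chosen `α_{z'}`). -/
def RealisableMA (T : TBox) (q : CQ) (z z' : Finset Var) (atm : QAtom) : Prop :=
  1 ≤ realQAnswer T q z z' atm

/-- `z` is realisable by `T`: equality-consistent and every nonempty
ma-connected subset of `z` is realisable. -/
def RealisableZ (T : TBox) (q : CQ) (z : Finset Var) (alpha : Finset Var → QAtom) : Prop :=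
  EqConsistent q z ∧
  ∀ z' : Finset Var, q.MAConnected z z' → z'.Nonempty → RealisableMA T q z z' (alpha z')

/-- The nonempty ma-connected subsets of `z`. -/
def maSets (q : CQ) (z : Finset Var) : Finset (Finset Var) :=
  z.powerset.filter (fun z' => q.MAConnected z z' ∧ z'.Nonempty)

def tTermVars (q : CQ) (z z' : Finset Var) : List Var :=
  (q.tTerms z z').foldr (fun t acc => Term.varsOf t ++ acc) []

/-- The equalities identifying all the terms of `t_{z'}`. -/
def eqAtomsFor (q : CQ) (z z' : Finset Var) : List QAtom :=
  (tTermVars q z z').foldr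
    (fun v acc => ((q.tTerms z z').map (fun t => QAtom.eqAt v t)) ++ acc) []

/-- Atoms of `q_z`: the atoms of `q` not mentioning a variable of `z`, plus,
for each nonempty ma-connected `z' ⊆ z`, the atom `α_{z'}` together with the
equalities identifying the terms of `t_{z'}`. -/
def qzAtoms (q : CQ) (z : Finset Var) (alpha : Finset Var → QAtom) : List QAtom :=
  q.atoms.filter (fun atm => decide (¬ ∃ v ∈ z, v ∈ QAtom.vars atm))
    ++ (maSets q z).toList.foldr (fun z' acc => alpha z' :: (eqAtomsFor q z z' ++ acc)) []

/-- The CQ `q_z(x) = ∃y'. φ_z(x,y')`. -/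
def qz (q : CQ) (z : Finset Var) (alpha : Finset Var → QAtom) : CQ where
  answerVars := q.answerVars
  existVars := q.existVars.filter (fun v => decide (∃ atm ∈ qzAtoms q z alpha, v ∈ QAtom.vars atm))
  atoms := qzAtoms q z alpha

/- ## The BALG rewriting `q̄` -/

/-- Value of an atom of `q_z` after the rewriting step 3 (`chasing back'' with
the TBox): concept atoms `A(t)` become `⋁_{T ⊨ C ⊑ A} ζ_C(t)`, role atoms with a
`z`-variable become the corresponding truncated difference, and the remaining
atoms are evaluated as before. -/
def rewAtomVal (T : TBox) (I : BagInterp) (z : Finset Var) (f : Var → I.Δ) : QAtom → ℕ∞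
  | QAtom.conceptAt A t => cclI T I (DLConcept.atomic A) (termVal I f t)
  | QAtom.roleAt P t₁ t₂ =>
      if Term.IsZVar t₂ z then
        cclI T I (DLConcept.ex (Role.atomic P)) (termVal I f t₁)
          - I.conceptMult (DLConcept.ex (Role.atomic P)) (termVal I f t₁)
      else if Term.IsZVar t₁ z then
        cclI T I (DLConcept.ex (Role.inv P)) (termVal I f t₂)
          - I.conceptMult (DLConcept.ex (Role.inv P)) (termVal I f t₂)
      else I.rI P (termVal I f t₁) (termVal I f t₂)
  | QAtom.eqAt v t => if f v = termVal I f t then 1 else 0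

/-- Bag answers of the BALG query `q̄_z`, obtained from `q_z` by projecting only
the variables of `y' ∖ z` and replacing atoms as in `rewAtomVal`. -/
def rewAnswer (T : TBox) (qq : CQ) (z : Finset Var) (I : BagInterp) (a : List Ind) : ℕ∞ :=
  bagSum (fun f : {f : Var → I.Δ //
      (∀ v, v ∉ qq.answerVars ++ qq.existVars.filter (fun u => decide (u ∉ z)) →
        f v = I.indMap 0) ∧
      qq.answerVars.map f = a.map I.indMap} =>
    (qq.atoms.map (rewAtomVal T I z f.1)).prod)

/- ## BALG¹_ε queries -/

def Term.fvars (t : Term) : Finset Var :=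
  match t with
  | Term.var v => {v}
  | Term.ind _ => ∅

/-- Syntax of BALG¹_ε queries. -/
inductive BQuery where
  | atomC : AtomicConcept → Term → BQuery
  | atomR : AtomicRole → Term → Term → BQuery
  | conj : BQuery → BQuery → BQuery
  | eqSel : BQuery → Var → Term → BQuery
  | proj : List Var → BQuery → BQuery
  | maxU : BQuery → BQuery → BQuery
  | arithU : BQuery → BQuery → BQuery
  | diff : BQuery → BQuery → BQuery

/-- Answer variables of a BALG¹_ε query. -/
def BQuery.fv : BQuery → Finset Var
  | BQuery.atomC _ t => t.fvars
  | BQuery.atomR _ t₁ t₂ => t₁.fvars ∪ t₂.fvars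
  | BQuery.conj q₁ q₂ => q₁.fv ∪ q₂.fv
  | BQuery.eqSel q _ t => q.fv ∪ t.fvars
  | BQuery.proj ys q => q.fv \ ys.toFinset
  | BQuery.maxU q₁ _ => q₁.fv
  | BQuery.arithU q₁ _ => q₁.fv
  | BQuery.diff q₁ _ => q₁.fv

/-- Well-formedness of BALG¹_ε queries. -/
def BQuery.WF : BQuery → Prop
  | BQuery.atomC _ _ => True
  | BQuery.atomR _ _ _ => True
  | BQuery.conj q₁ q₂ => q₁.WF ∧ q₂.WF
  | BQuery.eqSel q x _ => q.WF ∧ x ∈ q.fv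
  | BQuery.proj _ q => q.WF
  | BQuery.maxU q₁ q₂ => q₁.WF ∧ q₂.WF ∧ q₁.fv = q₂.fv
  | BQuery.arithU q₁ q₂ => q₁.WF ∧ q₂.WF ∧ q₁.fv = q₂.fv
  | BQuery.diff q₁ q₂ => q₁.WF ∧ q₂.WF ∧ q₁.fv = q₂.fv

/-- Semantics of BALG¹_ε queries under a valuation of the answer variables. -/
def BQuery.val (I : BagInterp) : BQuery → (Var → I.Δ) → ℕ∞
  | BQuery.atomC A t, f => I.cI A (termVal I f t)
  | BQuery.atomR P t₁ t₂, f => I.rI P (termVal I f t₁) (termVal I f t₂)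
  | BQuery.conj q₁ q₂, f => q₁.val I f * q₂.val I f
  | BQuery.eqSel q x t, f => if f x = termVal I f t then q.val I f else 0
  | BQuery.proj ys q, f => bagSum (fun g : {g : Var → I.Δ // ∀ v, v ∉ ys → g v = f v} => q.val I g.1)
  | BQuery.maxU q₁ q₂, f => max (q₁.val I f) (q₂.val I f)
  | BQuery.arithU q₁ q₂, f => q₁.val I f + q₂.val I f
  | BQuery.diff q₁ q₂, f => q₁.val I f - q₂.val I f

/-- Bag answers of a BALG¹_ε query with answer variables `xs` on a tuple `a`. -/
def BQuery.answer (Q : BQuery) (xs : List Var) (I : BagInterp) (a : List Ind) : ℕ∞ :=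
  if a.length = xs.length then Q.val I (fun v => I.indMap (a.getD (xs.idxOf v) 0)) else 0

/- ## Enumerated bags, e-homomorphisms, and e-valuations -/

/-- Enumerated copies of a bag of domain elements (for an atomic concept). -/
def EBagC (I : BagInterp) (A : AtomicConcept) : Type :=
  {p : I.Δ × ℕ // 1 ≤ p.2 ∧ (p.2 : ℕ∞) ≤ I.cI A p.1}

/-- Enumerated copies of a bag of pairs (for an atomic role). -/
def EBagR (I : BagInterp) (P : AtomicRole) : Type :=
  {p : (I.Δ × I.Δ) × ℕ // 1 ≤ p.2 ∧ (p.2 : ℕ∞) ≤ I.rI P p.1.1 p.1.2}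

/-- An e-homomorphism between the enumerated versions of two bag interpretations. -/
structure EHom (I J : BagInterp) where
  h : I.Δ → J.Δ
  hInd : ∀ a : Ind, h (I.indMap a) = J.indMap a
  hC : ∀ A : AtomicConcept, EBagC I A → EBagC J A
  hC_fst : ∀ (A : AtomicConcept) (x : EBagC I A), (hC A x).1.1 = h x.1.1
  hR : ∀ P : AtomicRole, EBagR I P → EBagR J P
  hR_fst : ∀ (P : AtomicRole) (x : EBagR I P), (hR P x).1.1 = (h x.1.1.1, h x.1.1.2)

/-- Predicate-injectivity on individuals of an e-homomorphism. -/
def EHom.PredInj {I J : BagInterp} (e : EHom I J) : Prop :=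
  ∀ u : I.Δ, (∃ a : Ind, e.h u = J.indMap a) →
    (∀ A : AtomicConcept, ∀ x y : EBagC I A,
      x.1.1 = u → y.1.1 = u → x.1.2 ≠ y.1.2 → e.hC A x ≠ e.hC A y) ∧
    (∀ P : AtomicRole, ∀ x y : EBagR I P, x.1.1.1 = u → y.1.1.1 = u →
      (x.1.1.2, x.1.2) ≠ (y.1.1.2, y.1.2) → e.hR P x ≠ e.hR P y) ∧
    (∀ P : AtomicRole, ∀ x y : EBagR I P, x.1.1.2 = u → y.1.1.2 = u →
      (x.1.1.1, x.1.2) ≠ (y.1.1.1, y.1.2) → e.hR P x ≠ e.hR P y)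

/-- Enumerated atoms of a CQ (seen as a bag of atoms). -/
def EAtom (q : CQ) : Type := {p : QAtom × ℕ // 1 ≤ p.2 ∧ p.2 ≤ q.atoms.count p.1}

/-- An e-valuation of the enumerated query `q^e` over the enumerated
interpretation `I^e`. -/
structure EVal (q : CQ) (I : BagInterp) where
  ν : Var → I.Δ
  hjunk : ∀ v, v ∉ q.vars → ν v = I.indMap 0
  heq : ∀ z t, QAtom.eqAt z t ∈ q.atoms → ν z = termVal I ν t
  ℓ : EAtom q → ℕ
  hone : ∀ e : EAtom q, 1 ≤ ℓ e
  hconcept : ∀ (e : EAtom q) (A : AtomicConcept) (t : Term),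
    e.1.1 = QAtom.conceptAt A t → (ℓ e : ℕ∞) ≤ I.cI A (termVal I ν t)
  hrole : ∀ (e : EAtom q) (P : AtomicRole) (t₁ t₂ : Term),
    e.1.1 = QAtom.roleAt P t₁ t₂ → (ℓ e : ℕ∞) ≤ I.rI P (termVal I ν t₁) (termVal I ν t₂)
  heqm : ∀ (e : EAtom q) (z : Var) (t : Term), e.1.1 = QAtom.eqAt z t → ℓ e = 1

/-- The tuple of domain elements to which an e-atom is sent by an e-valuation. -/
def EVal.imgTerms {q : CQ} {I : BagInterp} (ev : EVal q I) (e : EAtom q) : List I.Δ :=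
  (QAtom.terms e.1.1).map (termVal I ev.ν)

/-- The enumerated image of an e-atom under an e-valuation. -/
def EVal.img {q : CQ} {I : BagInterp} (ev : EVal q I) (e : EAtom q) : List I.Δ × ℕ :=
  (ev.imgTerms e, ev.ℓ e)

/- ## Auxiliary concrete queries -/

/-- The CQ `ζ_C(x)`: `A(x)`, `∃y.P(x,y)` or `∃y.P(y,x)`. -/
def zetaCQ : DLConcept → CQ
  | DLConcept.atomic A => ⟨[0], [], [QAtom.conceptAt A (Term.var 0)]⟩
  | DLConcept.ex (Role.atomic P) => ⟨[0], [1], [QAtom.roleAt P (Term.var 0) (Term.var 1)]⟩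
  | DLConcept.ex (Role.inv P) => ⟨[0], [1], [QAtom.roleAt P (Term.var 1) (Term.var 0)]⟩

/-- The CQ `q(x) = R(x,x)`. -/
def selfCQ (P : AtomicRole) : CQ := ⟨[0], [], [QAtom.roleAt P (Term.var 0) (Term.var 0)]⟩

/-- A = atomic concept 0, B = atomic concept 1, R = atomic role 0, individuals
a = 0, b = 1.  TBox `{A ⊑ ∃R, ∃R⁻ ⊑ B}`. -/
def tbox7 : TBox :=
  {TBoxAxiom.cIncl (DLConcept.atomic 0) (DLConcept.ex (Role.atomic 0)),
   TBoxAxiom.cIncl (DLConcept.ex (Role.inv 0)) (DLConcept.atomic 1)}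

/-- The rooted CQ `q(x) = ∃y. R(x,y) ∧ B(y)` (x = variable 0, y = variable 1). -/
def q7 : CQ :=
  ⟨[0], [1], [QAtom.roleAt 0 (Term.var 0) (Term.var 1), QAtom.conceptAt 1 (Term.var 1)]⟩

/-- The counterexample bag ABox: `A(a)` with multiplicity 3, `R(a,b)` with
multiplicity 2, `B(b)` with multiplicity 3. -/
def abox7 : BagABox :=
  Multiset.replicate 3 (Assertion.conceptA 0 0)
    + Multiset.replicate 2 (Assertion.roleA 0 0 1)
    + Multiset.replicate 3 (Assertion.conceptA 1 1)


/-!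
In a bag model of `⟨tbox7, abox7⟩` write `r y` and `c y` for the multiplicities of `R(a, y)`
and `B(y)`. The ABox gives `r b ≥ 2` and `c b ≥ 3`, the axiom `A ⊑ ∃R` gives `∑ r ≥ 3`, and
`∃R⁻ ⊑ B` gives `r ≤ c`. Hence `q(a) = ∑ r·c ≥ ∑ r + 2·r b ≥ 3 + 4 = 7`, and a model with a
single extra `R`-successor of `a` attains `7`.

Over `C(⟨∅, abox7⟩)` every concept atom has multiplicity `0` or `3` and every role atom `0` or
`2`. A safe CQ with at least one variable contains such an atom, so all its bag answers are
divisible by `2` or by `3`; none of them is `7`.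
-/

lemma ENat.natCast_dvd_natCast_iff {d n : ℕ} : (d : ℕ∞) ∣ n ↔ d ∣ n := by
  refine ⟨fun ⟨c, hc⟩ => ?_, Nat.cast_dvd_cast⟩
  induction c using ENat.recTopCoe with
  | top =>
    rcases eq_or_ne d 0 with rfl | hd
    · simp_all
    · simp [ENat.mul_top (Nat.cast_ne_zero.mpr hd)] at hc
  | coe c => exact ⟨c, by exact_mod_cast hc⟩

lemma ENat.exists_eq_of_iSup_eq_natCast {ι : Sort*} {f : ι → ℕ∞} {n : ℕ} (hn : n ≠ 0)
    (h : ⨆ i, f i = n) : ∃ i, f i = n := by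
  have : Nonempty ι := by
    by_contra hι
    rw [not_nonempty_iff] at hι
    simp_all [eq_comm]
  obtain ⟨i, hi⟩ := ENat.exists_eq_iSup_of_lt_top (h ▸ ENat.natCast_lt_top n)
  exact ⟨i, hi.trans h⟩

section BagSum

variable {α β : Type*}

lemma le_bagSum (f : α → ℕ∞) (s : Finset α) : ∑ x ∈ s, f x ≤ bagSum f :=
  le_iSup (fun s : Finset α => ∑ x ∈ s, f x) s

lemma bagSum_le {f : α → ℕ∞} {c : ℕ∞} (h : ∀ s : Finset α, ∑ x ∈ s, f x ≤ c) :
    bagSum f ≤ c :=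
  iSup_le h

lemma bagSum_eq_sum_of_support_subset (f : α → ℕ∞) {s : Finset α} (h : ∀ x ∉ s, f x = 0) :
    bagSum f = ∑ x ∈ s, f x := by
  refine le_antisymm (bagSum_le fun t => ?_) (le_bagSum f s)
  calc ∑ x ∈ t, f x = ∑ x ∈ t ∩ s, f x :=
        (Finset.sum_subset Finset.inter_subset_left fun x hxt hx =>
          h x fun hxs => hx (Finset.mem_inter.mpr ⟨hxt, hxs⟩)).symm
    _ ≤ ∑ x ∈ s, f x := Finset.sum_le_sum_of_subset Finset.inter_subset_right

lemma bagSum_comp_equiv (e : α ≃ β) (g : β → ℕ∞) : bagSum (g ∘ e) = bagSum g := by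
  unfold bagSum
  rw [← e.finsetCongr.iSup_comp]
  simp [Equiv.finsetCongr_apply, Finset.sum_map]

lemma natCast_dvd_of_bagSum_eq {f : α → ℕ∞} {d n : ℕ} (hd : ∀ x, (d : ℕ∞) ∣ f x)
    (hf : bagSum f = n) : d ∣ n := by
  obtain ⟨s, hs⟩ := ENat.exists_eq_iSup_of_lt_top (f := fun s : Finset α => ∑ x ∈ s, f x)
    (by rw [← bagSum, hf]; exact ENat.natCast_lt_top n)
  rw [← bagSum, hf] at hs
  exact ENat.natCast_dvd_natCast_iff.mp (hs ▸ Finset.dvd_sum fun x _ => hd x)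

lemma add_mul_le_bagSum_mul {r c : α → ℕ∞} {b : α} {k m : ℕ∞} (hrc : ∀ y, r y ≤ c y)
    (hcb : m + 1 ≤ c b) (hr : k ≤ bagSum r) :
    k + m * r b ≤ bagSum (fun y => r y * c y) := by
  have hpoint : ∀ y, r y + (if y = b then m * r b else 0) ≤ r y * c y := by
    intro y
    split_ifs with hy
    · subst hy
      calc r y + m * r y = r y * (m + 1) := by ring
        _ ≤ r y * c y := by gcongr
    · rcases eq_or_ne (r y) 0 with h0 | h0
      · simp [h0]
      calc r y + 0 = r y * 1 := by ring
        _ ≤ r y * c y := by gcongr; exact (Order.one_le_iff_ne_zero.mpr h0).trans (hrc y)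
  calc k + m * r b ≤ bagSum r + m * r b := by gcongr
    _ = ⨆ s : Finset α, (∑ y ∈ s, r y + m * r b) := ENat.iSup_add _
    _ ≤ bagSum (fun y => r y * c y) := iSup_le fun s => ?_
  calc ∑ y ∈ s, r y + m * r b
      ≤ ∑ y ∈ insert b s, (r y + if y = b then m * r b else 0) := by
        rw [Finset.sum_add_distrib, Finset.sum_ite_eq' _ _ _, if_pos (Finset.mem_insert_self b s)]
        gcongr
        exact Finset.subset_insert b s
    _ ≤ ∑ y ∈ insert b s, r y * c y := Finset.sum_le_sum fun y _ => hpoint y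
    _ ≤ _ := le_bagSum _ _

end BagSum

lemma count_conceptA_abox7 (A : AtomicConcept) (a : Ind) :
    abox7.count (Assertion.conceptA A a)
      = (if A = 0 ∧ a = 0 then 3 else 0) + (if A = 1 ∧ a = 1 then 3 else 0) := by
  simp only [abox7, Multiset.count_add, Multiset.count_replicate]
  grind

lemma count_roleA_abox7 (P : AtomicRole) (a b : Ind) :
    abox7.count (Assertion.roleA P a b) = if P = 0 ∧ a = 0 ∧ b = 1 then 2 else 0 := by
  simp only [abox7, Multiset.count_add, Multiset.count_replicate]
  grind

def q7ValuationEquiv (I : BagInterp) : I.Δ ≃ {f : Var → I.Δ //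
    (∀ v, v ∉ q7.vars → f v = I.indMap 0) ∧ q7.answerVars.map f = [0].map I.indMap} where
  toFun y := ⟨fun v => if v = 1 then y else I.indMap 0, by
    refine ⟨fun v hv => ?_, by simp [q7]⟩
    simp only [q7, CQ.vars, List.cons_append, List.nil_append, List.mem_cons,
      List.not_mem_nil, or_false, not_or] at hv
    simp [hv.2]⟩
  invFun f := f.1 1
  left_inv y := by simp
  right_inv := by
    rintro ⟨f, hjunk, hx⟩
    simp only [q7, List.map_cons, List.map_nil, List.cons.injEq, and_true] at hx
    ext v
    by_cases hv1 : v = 1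
    · simp [hv1]
    by_cases hv0 : v = 0
    · simp [hv0, hx]
    · simp [hv1, hjunk v (by simp [q7, CQ.vars, hv0, hv1])]

lemma q7_bagAnswer (I : BagInterp) :
    q7.bagAnswer I [0] = bagSum (fun y => I.rI 0 (I.indMap 0) y * I.cI 1 y) := by
  rw [CQ.bagAnswer, ← bagSum_comp_equiv (q7ValuationEquiv I)]
  congr 1
  funext y
  simp only [q7, List.map_cons, List.map_nil, List.prod_cons, List.prod_nil, mul_one,
    QAtom.mult, termVal]
  rfl

lemma seven_le_q7_bagAnswer {I : BagInterp} (hI : I.IsModel ⟨tbox7, abox7⟩) :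
    7 ≤ q7.bagAnswer I [0] := by
  have hA : 3 ≤ I.cI 0 (I.indMap 0) := by
    simpa [BagABox.mult, BagInterp.assertMult, count_conceptA_abox7]
      using hI.2 (Assertion.conceptA 0 0)
  have hB : 3 ≤ I.cI 1 (I.indMap 1) := by
    simpa [BagABox.mult, BagInterp.assertMult, count_conceptA_abox7]
      using hI.2 (Assertion.conceptA 1 1)
  have hR : 2 ≤ I.rI 0 (I.indMap 0) (I.indMap 1) := by
    simpa [BagABox.mult, BagInterp.assertMult, count_roleA_abox7]
      using hI.2 (Assertion.roleA 0 0 1)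
  have hA_sub_exR : I.cI 0 (I.indMap 0) ≤ bagSum (I.rI 0 (I.indMap 0)) :=
    hI.1 (.cIncl (.atomic 0) (.ex (.atomic 0))) (by simp [tbox7]) (I.indMap 0)
  have hexRinv_sub_B : ∀ y, I.rI 0 (I.indMap 0) y ≤ I.cI 1 y := fun y =>
    calc I.rI 0 (I.indMap 0) y = ∑ u ∈ {I.indMap 0}, I.rI 0 u y := by simp
      _ ≤ bagSum (fun u => I.rI 0 u y) := le_bagSum _ _
      _ ≤ I.cI 1 y := hI.1 (.cIncl (.ex (.inv 0)) (.atomic 1)) (by simp [tbox7]) y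
  rw [q7_bagAnswer]
  calc (7 : ℕ∞) = 3 + 2 * 2 := by norm_num
    _ ≤ 3 + 2 * I.rI 0 (I.indMap 0) (I.indMap 1) := by gcongr
    _ ≤ _ := add_mul_le_bagSum_mul hexRinv_sub_B (hB.trans' (by norm_num))
      (hA.trans hA_sub_exR)

/-- Individuals `a = 0`, `b = 1`; the element `2` is the `R`-successor of `a` demanded by the
third copy of `A(a)`. -/
@[reducible] def model7 : BagInterp where
  Δ := ℕ
  dne := ⟨0⟩
  indMap := id
  indInj _ _ h := h
  cI A u :=
    if A = 0 ∧ u = 0 then 3 else if A = 1 ∧ u = 1 then 3 else if A = 1 ∧ u = 2 then 1 else 0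
  rI P u v := if P = 0 ∧ u = 0 ∧ v = 1 then 2 else if P = 0 ∧ u = 0 ∧ v = 2 then 1 else 0

lemma model7_isModel : model7.IsModel ⟨tbox7, abox7⟩ := by
  refine ⟨fun ax hax => ?_, fun s => ?_⟩
  · simp only [tbox7, Finset.mem_insert, Finset.mem_singleton] at hax
    rcases hax with rfl | rfl <;> intro u
    · show model7.cI 0 u ≤ bagSum (model7.rI 0 u)
      rcases eq_or_ne u 0 with rfl | hu
      · calc model7.cI 0 0 = ∑ v ∈ {1, 2}, model7.rI 0 0 v := by simp; norm_num
          _ ≤ _ := le_bagSum _ _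
      · simp [hu]
    · show bagSum (fun v => model7.rI 0 v u) ≤ model7.cI 1 u
      rw [bagSum_eq_sum_of_support_subset _ (s := {0}) fun v hv => by simp_all]
      simp only [Finset.sum_singleton]
      split_ifs <;> simp_all
      norm_num
  · cases s with
    | conceptA A a =>
      simp only [BagABox.mult, BagInterp.assertMult, count_conceptA_abox7]
      split_ifs <;> simp_all
    | roleA P a b =>
      simp only [BagABox.mult, BagInterp.assertMult, count_roleA_abox7]
      split_ifs <;> simp_all

lemma q7_bagAnswer_model7 : q7.bagAnswer model7 [0] = 7 := by
  rw [q7_bagAnswer, bagSum_eq_sum_of_support_subset _ (s := {1, 2}) fun y hy => ?_]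
  · simp
    norm_num
  · simp only [Finset.mem_insert, Finset.mem_singleton, not_or] at hy
    simp [hy.1, hy.2]

lemma bagCertain_q7 : bagCertain ⟨tbox7, abox7⟩ q7 [0] = 7 :=
  le_antisymm (q7_bagAnswer_model7 ▸ iInf₂_le model7 model7_isModel)
    (le_iInf₂ fun _ => seven_le_q7_bagAnswer)

lemma natCast_dvd_of_bagAnswer_eq {q : CQ} {I : BagInterp} {atm : QAtom} {d n : ℕ}
    {a : List Ind} (hatm : atm ∈ q.atoms) (hd : ∀ f, (d : ℕ∞) ∣ atm.mult I f)
    (h : q.bagAnswer I a = n) : d ∣ n := by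
  rw [CQ.bagAnswer] at h
  refine natCast_dvd_of_bagSum_eq (fun f => ?_) h
  exact (hd f.1).trans (List.dvd_prod (List.mem_map_of_mem (f := QAtom.mult I f.1) hatm))

lemma exists_dvd_mult_emptyCanInterp_abox7 {atm : QAtom} (hatm : ∀ z t, atm ≠ QAtom.eqAt z t) :
    ∃ d ∈ ({2, 3} : Finset ℕ), ∀ f, (d : ℕ∞) ∣ atm.mult (emptyCanInterp abox7) f := by
  cases atm with
  | conceptAt A t =>
    have h3 (a : Ind) : 3 ∣ abox7.count (.conceptA A a) := by
      rw [count_conceptA_abox7]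
      split_ifs <;> norm_num
    exact ⟨3, by simp, fun f => Nat.cast_dvd_cast (h3 _)⟩
  | roleAt P t₁ t₂ =>
    have h2 (a b : Ind) : 2 ∣ abox7.count (.roleA P a b) := by
      rw [count_roleA_abox7]
      split_ifs <;> norm_num
    exact ⟨2, by simp, fun f => Nat.cast_dvd_cast (h2 _ _)⟩
  | eqAt z t => exact absurd rfl (hatm z t)

lemma bagAnswer_emptyCanInterp_abox7_ne_seven {q : CQ} {x : Var} (hq : q.WellFormed)
    (hx : x ∈ q.vars) (a : List Ind) : q.bagAnswer (emptyCanInterp abox7) a ≠ 7 := by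
  intro h
  obtain ⟨-, atm, hatm, hne, -⟩ := hq.2.2.2.2 x hx
  obtain ⟨d, hd, hdvd⟩ := exists_dvd_mult_emptyCanInterp_abox7 hne
  have hd7 : d ∣ 7 := natCast_dvd_of_bagAnswer_eq hatm hdvd h
  simp only [Finset.mem_insert, Finset.mem_singleton] at hd
  rcases hd with rfl | rfl <;> norm_num at hd7

lemma tbox7_isCore : TBox.IsCore tbox7 := by
  intro ax hax
  simp only [tbox7, Finset.mem_insert, Finset.mem_singleton] at hax
  rcases hax with rfl | rfl <;> exact Or.inl ⟨_, _, rfl⟩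

lemma q7_wellFormed : q7.WellFormed := by
  refine ⟨by simp [q7], by simp [q7], by simp [q7], ?_, fun v hv => ?_⟩
  · intro atm hatm v hv
    simp only [q7, List.mem_cons, List.not_mem_nil, or_false] at hatm
    rcases hatm with rfl | rfl <;> simp_all [QAtom.vars, Term.varsOf, CQ.vars, q7]
  · refine ⟨Term.var v, QAtom.roleAt 0 (Term.var 0) (Term.var 1), by simp [q7], by simp, ?_,
      Relation.EqvGen.refl _⟩
    simp only [q7, CQ.vars, List.cons_append, List.nil_append, List.mem_cons,
      List.not_mem_nil, or_false] at hv
    rcases hv with rfl | rfl <;> simp [QAtom.terms]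

lemma q7_rooted : q7.Rooted := by
  rintro t ⟨atm, hatm, ht⟩
  have hyx : q7.gaifmanAdj (Term.var 1) (Term.var 0) :=
    ⟨QAtom.roleAt 0 (Term.var 0) (Term.var 1), by simp [q7], by simp [QAtom.terms],
      by simp [QAtom.terms]⟩
  refine ⟨Term.var 0, ?_, Or.inl ⟨0, by simp [q7], rfl⟩⟩
  simp only [q7, List.mem_cons, List.not_mem_nil, or_false] at hatm
  rcases hatm with rfl | rfl <;>
    simp only [QAtom.terms, List.mem_cons, List.not_mem_nil, or_false] at ht <;>
    rcases ht with rfl | rfl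
  · exact .refl
  all_goals exact .single hyx

/-- Rooted CQs are not rewritable to max unions of CQs for
DL-Lite_core^bag: for the (core) TBox `tbox7` and the rooted CQ `q7`, for every
max union `q₁ ∨ … ∨ q_n` of CQs the ABox `abox7` is a counterexample:
`⟨tbox7, abox7⟩` is satisfiable and the bag certain answers of `q7` over it
differ from the pointwise maximum of the bag answers of the `q_i` over
`C(⟨∅, abox7⟩)`. -/
theorem statement_7 :
    TBox.IsCore tbox7 ∧ q7.WellFormed ∧ q7.Rooted ∧
    Ontology.Satisfiable ⟨tbox7, abox7⟩ ∧
    ∀ qs : List CQ, qs ≠ [] →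
      (∀ q' ∈ qs, q'.WellFormed ∧ q'.answerVars = q7.answerVars) →
      ∃ a : List Ind,
        bagCertain ⟨tbox7, abox7⟩ q7 a
          ≠ ⨆ q' ∈ qs, q'.bagAnswer (emptyCanInterp abox7) a := by
  refine ⟨tbox7_isCore, q7_wellFormed, q7_rooted, ⟨model7, model7_isModel⟩,
    fun qs _ hqs => ⟨[0], fun h => ?_⟩⟩
  rw [bagCertain_q7] at h
  obtain ⟨q', hq'⟩ := ENat.exists_eq_of_iSup_eq_natCast (n := 7) (by norm_num) h.symm
  obtain ⟨hmem, hq'7⟩ := ENat.exists_eq_of_iSup_eq_natCast (n := 7) (by norm_num) hq'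
  have hx : 0 ∈ q'.vars := by simp [CQ.vars, (hqs q' hmem).2, q7]
  exact bagAnswer_emptyCanInterp_abox7_ne_seven (hqs q' hmem).1 hx [0] hq'7
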